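/- For 0 < c < 1/2, the function λ(a) = (1/2)(e^a + e^{-a})e^{-ca²} - 1 has a unique positive root a₀; moreover λ(a) ≥ 0 for a ∈ [0, a₀] and λ(a) ≤ 0 for a ≥ a₀. -/

import Mathlib

open Real Set

/-! For `a > 0`, `cosh a · e^{-c a²} = exp (a² (log (cosh a) / a² - c))`, so the sign of `λ(a)` is
that of `log (cosh a) / a² - c`. The ratio `log (cosh a) / a²` is strictly decreasing on `(0, ∞)`:
its derivative has the sign of `a tanh a - 2 log (cosh a)`, and `2 log (cosh a) - a tanh a`
vanishes at `0` with derivative `(sinh a cosh a - a) / cosh² a > 0`. From `cosh a ≥ 1 + a²/2` the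
ratio is at least `1 / (2 + a²)`, which exceeds `c` at `a = √(1 - 2c)`, and from `cosh a < eᵃ` it
is below `1 / a`, hence below `c` at `a = 1 / c`. So the ratio crosses `c` exactly once. -/

lemma Real.hasDerivAt_tanh (x : ℝ) : HasDerivAt tanh (1 / cosh x ^ 2) x := by
  have h := (hasDerivAt_sinh x).div (hasDerivAt_cosh x) (cosh_pos x).ne'
  rw [← sq, ← sq, cosh_sq_sub_sinh_sq] at h
  exact h.congr_of_eventuallyEq (.of_forall fun y => tanh_eq_sinh_div_cosh y)

lemma Real.hasDerivAt_log_cosh (x : ℝ) : HasDerivAt (fun y => log (cosh y)) (tanh x) x := by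
  simpa [tanh_eq_sinh_div_cosh] using (hasDerivAt_cosh x).log (cosh_pos x).ne'

lemma Real.self_lt_sinh_mul_cosh {x : ℝ} (hx : 0 < x) : x < sinh x * cosh x := by
  have := self_lt_sinh_iff.2 (mul_pos two_pos hx)
  rw [sinh_two_mul] at this
  linarith

lemma Real.one_add_sq_div_two_le_cosh (x : ℝ) : 1 + x ^ 2 / 2 ≤ cosh x := by
  have hhalf : cosh x = 1 + 2 * sinh (x / 2) ^ 2 := by
    conv_lhs => rw [← mul_div_cancel₀ x two_ne_zero, cosh_two_mul, cosh_sq]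
    ring
  have hsinh : (x / 2) ^ 2 ≤ sinh (x / 2) ^ 2 :=
    sq_le_sq.2 (by rw [abs_sinh]; exact self_le_sinh_iff.2 (abs_nonneg _))
  linarith

lemma Real.log_cosh_lt_self {x : ℝ} (hx : 0 < x) : log (cosh x) < x := by
  rw [log_lt_iff_lt_exp (cosh_pos x), cosh_eq]
  linarith [exp_lt_exp.2 (neg_lt_self hx)]

lemma Real.sq_div_two_add_sq_le_log_cosh (x : ℝ) : x ^ 2 / (2 + x ^ 2) ≤ log (cosh x) := by
  calc x ^ 2 / (2 + x ^ 2) = 1 - (1 + x ^ 2 / 2)⁻¹ := by field_simp; ring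
    _ ≤ 1 - (cosh x)⁻¹ := by gcongr; exact one_add_sq_div_two_le_cosh x
    _ ≤ log (cosh x) := one_sub_inv_le_log_of_pos (cosh_pos x)

lemma Real.mul_tanh_lt_two_mul_log_cosh {x : ℝ} (hx : 0 < x) : x * tanh x < 2 * log (cosh x) := by
  let g : ℝ → ℝ := fun y => 2 * log (cosh y) - y * tanh y
  have hg : ∀ y, HasDerivAt g (tanh y - y / cosh y ^ 2) y := fun y => by
    refine (((hasDerivAt_log_cosh y).const_mul 2).sub
      ((hasDerivAt_id y).mul (hasDerivAt_tanh y))).congr_deriv ?_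
    simp only [id]
    ring
  have hmono : StrictMonoOn g (Ici 0) := by
    refine strictMonoOn_of_deriv_pos (convex_Ici 0)
      (fun y _ => (hg y).continuousAt.continuousWithinAt) fun y hy => ?_
    rw [interior_Ici] at hy
    rw [(hg y).deriv, tanh_eq_sinh_div_cosh, sub_pos, div_lt_div_iff₀ (by positivity) (cosh_pos y)]
    nlinarith [self_lt_sinh_mul_cosh hy.out, cosh_pos y]
  simpa [g] using hmono self_mem_Ici hx.le hx

noncomputable def logCoshDivSq (a : ℝ) : ℝ := log (cosh a) / a ^ 2

lemma hasDerivAt_logCoshDivSq {x : ℝ} (hx : x ≠ 0) :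
    HasDerivAt logCoshDivSq ((tanh x * x ^ 2 - log (cosh x) * (2 * x)) / (x ^ 2) ^ 2) x :=
  (hasDerivAt_log_cosh x).div (by simpa using hasDerivAt_pow 2 x) (pow_ne_zero 2 hx)

lemma continuousOn_logCoshDivSq : ContinuousOn logCoshDivSq (Ioi 0) := fun _ hx =>
  (hasDerivAt_logCoshDivSq (ne_of_gt hx)).continuousAt.continuousWithinAt

lemma strictAntiOn_logCoshDivSq : StrictAntiOn logCoshDivSq (Ioi 0) := by
  refine strictAntiOn_of_deriv_neg (convex_Ioi 0) continuousOn_logCoshDivSq fun x hx => ?_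
  rw [interior_Ioi, mem_Ioi] at hx
  rw [(hasDerivAt_logCoshDivSq hx.ne').deriv]
  refine div_neg_of_neg_of_pos ?_ (by positivity)
  nlinarith [mul_tanh_lt_two_mul_log_cosh hx]

lemma exists_logCoshDivSq_eq {c : ℝ} (hc₀ : 0 < c) (hc : c < 1 / 2) :
    ∃ a, 0 < a ∧ logCoshDivSq a = c := by
  have h2c : 0 < 1 - 2 * c := by linarith
  set a₁ := √(1 - 2 * c)
  have ha₁sq : a₁ ^ 2 = 1 - 2 * c := sq_sqrt h2c.le
  have ha₁ : 0 < a₁ := sqrt_pos.2 h2c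
  have hsmall : c ≤ logCoshDivSq a₁ := by
    rw [logCoshDivSq, le_div_iff₀ (by positivity)]
    calc c * a₁ ^ 2 ≤ a₁ ^ 2 / (2 + a₁ ^ 2) := by
          rw [ha₁sq, le_div_iff₀ (by linarith)]
          nlinarith [mul_nonneg (sq_nonneg (1 - 2 * c)) (by linarith : (0 : ℝ) ≤ 1 - c)]
      _ ≤ log (cosh a₁) := sq_div_two_add_sq_le_log_cosh a₁
  have hlarge : logCoshDivSq c⁻¹ ≤ c := by
    rw [logCoshDivSq, div_le_iff₀ (by positivity)]
    calc log (cosh c⁻¹) ≤ c⁻¹ := (log_cosh_lt_self (inv_pos.2 hc₀)).le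
      _ = c * c⁻¹ ^ 2 := by field_simp
  exact isPreconnected_Ioi.intermediate_value (inv_pos.2 hc₀) ha₁ continuousOn_logCoshDivSq
    ⟨hlarge, hsmall⟩

lemma cosh_mul_exp_neg_mul_sq (c : ℝ) {a : ℝ} (ha : a ≠ 0) :
    cosh a * exp (-c * a ^ 2) = exp (a ^ 2 * (logCoshDivSq a - c)) := by
  rw [logCoshDivSq, mul_sub, mul_div_cancel₀ _ (pow_ne_zero 2 ha), exp_sub, exp_log (cosh_pos a),
    neg_mul, exp_neg, div_eq_mul_inv, mul_comm c]

theorem lambda_unique_positive_root (c : ℝ) (hc : c ∈ Set.Ioo (0 : ℝ) (1 / 2)) :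
    ∃ a₀ : ℝ, 0 < a₀ ∧ Real.cosh a₀ * Real.exp (-c * a₀ ^ 2) - 1 = 0 ∧
      (∀ a : ℝ, 0 < a → Real.cosh a * Real.exp (-c * a ^ 2) - 1 = 0 → a = a₀) ∧
      (∀ a ∈ Set.Icc (0 : ℝ) a₀, 0 ≤ Real.cosh a * Real.exp (-c * a ^ 2) - 1) ∧
      (∀ a : ℝ, a₀ ≤ a → Real.cosh a * Real.exp (-c * a ^ 2) - 1 ≤ 0) := by
  obtain ⟨a₀, ha₀, hroot⟩ := exists_logCoshDivSq_eq hc.1 hc.2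
  have hanti := strictAntiOn_logCoshDivSq
  refine ⟨a₀, ha₀, ?_, fun a ha h => ?_, fun a ⟨ha, hle⟩ => ?_, fun a hle => ?_⟩
  · rw [cosh_mul_exp_neg_mul_sq c ha₀.ne', hroot, sub_self, mul_zero, exp_zero, sub_self]
  · rw [cosh_mul_exp_neg_mul_sq c ha.ne', sub_eq_zero, exp_eq_one_iff, mul_eq_zero,
      sub_eq_zero] at h
    exact hanti.injOn ha ha₀ ((h.resolve_left (pow_ne_zero 2 ha.ne')).trans hroot.symm)
  · obtain rfl | ha := ha.eq_or_lt
    · simp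
    rw [cosh_mul_exp_neg_mul_sq c ha.ne', sub_nonneg, one_le_exp_iff]
    exact mul_nonneg (sq_nonneg a) (sub_nonneg.2 (hroot ▸ hanti.antitoneOn ha ha₀ hle))
  · have ha := ha₀.trans_le hle
    rw [cosh_mul_exp_neg_mul_sq c ha.ne', sub_nonpos, exp_le_one_iff]
    exact mul_nonpos_of_nonneg_of_nonpos (sq_nonneg a)
      (sub_nonpos.2 (hroot ▸ hanti.antitoneOn ha₀ ha hle))
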